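/- Let t ≥ 1 and let X = (X_1,…,X_t) and Y = (Y_1,…,Y_t) be independent finitely supported ℤ^t-valued random vectors such that for every σ ∈ S_t, E[1_σ(X)] = E[1_σ(Y)] = 1/t!, where 1_σ is evaluated via its extension to ℤ^t. Then E[SO_{2t}(X_1,…,X_t,Y_1,…,Y_t)] = 1/t!, where SO_{2t} is evaluated via its extension to ℤ^{2t}. -/

import Mathlib

open Classical Finset

noncomputable section
namespace OCSPPaper

/-- A permutation `σ` is compatible with the tuple `a` if `σ i < σ j` whenever `a i < a j`. -/
def compatiblePerm {m : ℕ} (a : Fin m → ℤ) (σ : Equiv.Perm (Fin m)) : Prop :=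
  ∀ i j : Fin m, a i < a j → σ i < σ j

/-- The extension of an ordering predicate `P ⊆ S_m` to arbitrary integer tuples:
the fraction of compatible permutations that belong to `P`. -/
noncomputable def extPred {m : ℕ} (P : Finset (Equiv.Perm (Fin m))) (a : Fin m → ℤ) : ℝ :=
  ((Finset.univ.filter fun σ => compatiblePerm a σ ∧ σ ∈ P).card : ℝ) /
    ((Finset.univ.filter fun σ => compatiblePerm a σ).card : ℝ)

/-- The Same-Order predicate `SO_{2t} ⊆ S_{2t}`: the relative order of the first `t` entries
coincides with the relative order of the last `t` entries. -/
def soPred (t : ℕ) : Finset (Equiv.Perm (Fin (t + t))) :=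
  Finset.univ.filter fun σ => ∀ i j : Fin t,
    σ (Fin.castAdd t i) < σ (Fin.castAdd t j) ↔ σ (Fin.natAdd t i) < σ (Fin.natAdd t j)

/-!
For a permutation `σ` compatible with `(x, y)`, the rank patterns of its two halves are
compatible with `x` and with `y`. Right multiplication by a block permutation `(g, h)` with
`x ∘ g = x` and `y ∘ h = y` preserves compatibility and shifts the pair of half patterns by
`(g, h)`; since any two patterns compatible with `x` differ by such a `g`, all fibres of this map
have the same size. So the half patterns of a uniformly random compatible permutation are
independent and uniform on the patterns compatible with `x` and with `y`, which gives
`SO_{2t}(x, y) = ∑_σ 1_σ(x) 1_σ(y)`. Independence of `X` and `Y` then yields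
`E[SO_{2t}(X, Y)] = ∑_σ E[1_σ(X)] E[1_σ(Y)] = t! / t!²`.
-/

open Function Equiv

section RankPerm

variable {n : ℕ} {α : Type*} [LinearOrder α]

lemma _root_.Equiv.Perm.eq_of_lt_iff_lt {π π' : Perm (Fin n)}
    (h : ∀ i j, π i < π j ↔ π' i < π' j) : π = π' := by
  have hmono : StrictMono (π' ∘ π.symm) := fun p q hpq =>
    (h (π.symm p) (π.symm q)).mp (by simpa using hpq)
  refine Equiv.ext fun i => ?_
  simpa using (congrFun hmono.eq_id (π i)).symm

/-- `rankPerm f i` is the position of `f i` in the sorted tuple. -/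
def rankPerm (f : Fin n → α) : Perm (Fin n) :=
  (Tuple.sort f)⁻¹

lemma rankPerm_lt_rankPerm_iff {f : Fin n → α} (hf : Injective f) (i j : Fin n) :
    rankPerm f i < rankPerm f j ↔ f i < f j := by
  have hm : StrictMono (f ∘ Tuple.sort f) :=
    (Tuple.monotone_sort f).strictMono_of_injective (hf.comp (Tuple.sort f).injective)
  have hf_eq : ∀ k, f k = (f ∘ Tuple.sort f) (rankPerm f k) := fun k => by simp [rankPerm]
  rw [hf_eq i, hf_eq j, hm.lt_iff_lt]

lemma rankPerm_eq_rankPerm_iff {β : Type*} [LinearOrder β] {f : Fin n → α} {g : Fin n → β}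
    (hf : Injective f) (hg : Injective g) :
    rankPerm f = rankPerm g ↔ ∀ i j, f i < f j ↔ g i < g j := by
  refine ⟨fun h i j => ?_, fun h => Perm.eq_of_lt_iff_lt fun i j => ?_⟩
  · rw [← rankPerm_lt_rankPerm_iff hf, ← rankPerm_lt_rankPerm_iff hg, h]
  · rw [rankPerm_lt_rankPerm_iff hf, rankPerm_lt_rankPerm_iff hg, h]

lemma rankPerm_comp {f : Fin n → α} (hf : Injective f) (g : Perm (Fin n)) :
    rankPerm (f ∘ g) = rankPerm f * g :=
  Perm.eq_of_lt_iff_lt fun i j => by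
    rw [rankPerm_lt_rankPerm_iff (hf.comp g.injective), Perm.mul_apply, Perm.mul_apply,
      rankPerm_lt_rankPerm_iff hf, comp_apply, comp_apply]

end RankPerm

section Compatible

variable {m : ℕ}

abbrev compatibles (a : Fin m → ℤ) : Finset (Perm (Fin m)) :=
  univ.filter fun σ => compatiblePerm a σ

lemma compatiblePerm_rankPerm (a : Fin m → ℤ) : compatiblePerm a (rankPerm a) := by
  intro i j hij
  by_contra! h
  have := Tuple.monotone_sort a h
  simp only [rankPerm, comp_apply, Perm.inv_def, apply_symm_apply] at this
  exact this.not_gt hij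

lemma compatibles_nonempty (a : Fin m → ℤ) : (compatibles a).Nonempty :=
  ⟨rankPerm a, mem_filter.mpr ⟨mem_univ _, compatiblePerm_rankPerm a⟩⟩

lemma compatiblePerm.mul_of_comp_eq {a : Fin m → ℤ} {σ g : Perm (Fin m)}
    (hσ : compatiblePerm a σ) (hg : a ∘ g = a) : compatiblePerm a (σ * g) := fun i j hij =>
  hσ (g i) (g j) (by rwa [← congrFun hg i, ← congrFun hg j] at hij)

lemma compatiblePerm.monotone_comp_inv {a : Fin m → ℤ} {σ : Perm (Fin m)}
    (hσ : compatiblePerm a σ) : Monotone (a ∘ ⇑σ⁻¹) := by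
  intro p q hpq
  by_contra! h
  exact hpq.not_gt (by simpa using hσ _ _ h)

lemma compatiblePerm.comp_inv_mul {a : Fin m → ℤ} {σ σ' : Perm (Fin m)}
    (hσ : compatiblePerm a σ) (hσ' : compatiblePerm a σ') : a ∘ ⇑(σ⁻¹ * σ') = a := by
  have h : a ∘ ⇑σ⁻¹ = a ∘ ⇑σ'⁻¹ := by
    rw [Tuple.comp_sort_eq_comp_iff_monotone.mpr hσ.monotone_comp_inv,
      Tuple.comp_sort_eq_comp_iff_monotone.mpr hσ'.monotone_comp_inv]
  funext i
  simpa using congrFun h (σ' i)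

end Compatible

section Blocks

variable {m n : ℕ}

def blockPerm : Perm (Fin m) × Perm (Fin n) →* Perm (Fin (m + n)) :=
  finSumFinEquiv.permCongrHom.toMonoidHom.comp (Perm.sumCongrHom _ _)

@[simp] lemma blockPerm_castAdd (g : Perm (Fin m) × Perm (Fin n)) (i : Fin m) :
    blockPerm g (Fin.castAdd n i) = Fin.castAdd n (g.1 i) := by
  simp [blockPerm, Equiv.permCongrHom_coe, Equiv.permCongr_apply]

@[simp] lemma blockPerm_natAdd (g : Perm (Fin m) × Perm (Fin n)) (i : Fin n) :
    blockPerm g (Fin.natAdd m i) = Fin.natAdd m (g.2 i) := by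
  simp [blockPerm, Equiv.permCongrHom_coe, Equiv.permCongr_apply]

lemma append_comp_blockPerm (x : Fin m → ℤ) (y : Fin n → ℤ)
    (g : Perm (Fin m) × Perm (Fin n)) :
    Fin.append x y ∘ blockPerm g = Fin.append (x ∘ g.1) (y ∘ g.2) := by
  funext k
  induction k using Fin.addCases <;> simp

def halfRanks (σ : Perm (Fin (m + n))) : Perm (Fin m) × Perm (Fin n) :=
  (rankPerm (σ ∘ Fin.castAdd n), rankPerm (σ ∘ Fin.natAdd m))

lemma halfRanks_mul_blockPerm (σ : Perm (Fin (m + n))) (g : Perm (Fin m) × Perm (Fin n)) :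
    halfRanks (σ * blockPerm g) = halfRanks σ * g := by
  have hleft : ⇑(σ * blockPerm g) ∘ Fin.castAdd n = (σ ∘ Fin.castAdd n) ∘ g.1 := by
    funext i; simp
  have hright : ⇑(σ * blockPerm g) ∘ Fin.natAdd m = (σ ∘ Fin.natAdd m) ∘ g.2 := by
    funext i; simp
  rw [halfRanks, hleft, hright,
    rankPerm_comp (σ.injective.comp (Fin.castAdd_injective m n)),
    rankPerm_comp (σ.injective.comp (Fin.natAdd_injective n m))]
  rfl

lemma halfRanks_mem_compatibles {x : Fin m → ℤ} {y : Fin n → ℤ} {σ : Perm (Fin (m + n))}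
    (hσ : compatiblePerm (Fin.append x y) σ) :
    halfRanks σ ∈ compatibles x ×ˢ compatibles y := by
  simp only [mem_product, mem_filter, mem_univ, true_and, halfRanks]
  constructor
  · intro i j hij
    rw [rankPerm_lt_rankPerm_iff (σ.injective.comp (Fin.castAdd_injective m n))]
    exact hσ _ _ (by simpa using hij)
  · intro i j hij
    rw [rankPerm_lt_rankPerm_iff (σ.injective.comp (Fin.natAdd_injective n m))]
    exact hσ _ _ (by simpa using hij)

end Blocks

section Fibers

variable {m n : ℕ} {x : Fin m → ℤ} {y : Fin n → ℤ}

lemma card_fiber_halfRanks_le {p q : Perm (Fin m) × Perm (Fin n)}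
    (hp : p ∈ compatibles x ×ˢ compatibles y) (hq : q ∈ compatibles x ×ˢ compatibles y) :
    #{σ ∈ compatibles (Fin.append x y) | halfRanks σ = p} ≤
      #{σ ∈ compatibles (Fin.append x y) | halfRanks σ = q} := by
  simp only [mem_product, mem_filter, mem_univ, true_and] at hp hq
  have hstab : Fin.append x y ∘ blockPerm (p⁻¹ * q) = Fin.append x y := by
    rw [append_comp_blockPerm]
    exact congrArg₂ Fin.append (hp.1.comp_inv_mul hq.1) (hp.2.comp_inv_mul hq.2)
  refine card_le_card_of_injOn (· * blockPerm (p⁻¹ * q)) ?_ (mul_left_injective _).injOn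
  intro σ hσ
  simp only [coe_filter, mem_filter, mem_univ, true_and, Set.mem_ofPred_eq] at hσ ⊢
  refine ⟨hσ.1.mul_of_comp_eq hstab, ?_⟩
  rw [halfRanks_mul_blockPerm, hσ.2, mul_inv_cancel_left]

lemma card_filter_halfRanks_mem (Q : Finset (Perm (Fin m) × Perm (Fin n))) :
    #{σ ∈ compatibles (Fin.append x y) | halfRanks σ ∈ Q} =
      #(Q ∩ compatibles x ×ˢ compatibles y) *
        #{σ ∈ compatibles (Fin.append x y) | halfRanks σ = (rankPerm x, rankPerm y)} := by
  have hbase : (rankPerm x, rankPerm y) ∈ compatibles x ×ˢ compatibles y := by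
    simp [compatiblePerm_rankPerm]
  have hmaps : Set.MapsTo (halfRanks : Perm (Fin (m + n)) → _)
      (({σ ∈ compatibles (Fin.append x y) | halfRanks σ ∈ Q} : Finset _) : Set _)
      ((Q ∩ compatibles x ×ˢ compatibles y : Finset _) : Set _) := fun σ hσ => by
    simp only [mem_coe, mem_filter, mem_univ, true_and] at hσ
    exact mem_inter.mpr ⟨hσ.2, halfRanks_mem_compatibles hσ.1⟩
  rw [card_eq_sum_card_fiberwise hmaps]
  refine sum_const_nat fun p hp => ?_
  obtain ⟨hpQ, hp⟩ := mem_inter.mp hp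
  rw [filter_filter, filter_congr fun σ _ => and_iff_right_of_imp fun h => h ▸ hpQ]
  exact le_antisymm (card_fiber_halfRanks_le hp hbase) (card_fiber_halfRanks_le hbase hp)

lemma extPred_eq_card_div (P : Finset (Perm (Fin m))) (a : Fin m → ℤ) :
    extPred P a = #{σ ∈ compatibles a | σ ∈ P} / #(compatibles a) := by
  rw [extPred, filter_filter]

lemma extPred_singleton (σ : Perm (Fin m)) (a : Fin m → ℤ) :
    extPred {σ} a = if σ ∈ compatibles a then (#(compatibles a) : ℝ)⁻¹ else 0 := by
  rw [extPred_eq_card_div, filter_mem_eq_inter]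
  split_ifs with h
  · rw [inter_singleton_of_mem h, card_singleton, Nat.cast_one, one_div]
  · rw [inter_singleton_of_notMem h, card_empty, Nat.cast_zero, zero_div]

lemma extPred_filter_halfRanks_mem (Q : Finset (Perm (Fin m) × Perm (Fin n))) :
    extPred {σ | halfRanks σ ∈ Q} (Fin.append x y) =
      ∑ p ∈ Q, extPred {p.1} x * extPred {p.2} y := by
  set K := #{σ ∈ compatibles (Fin.append x y) | halfRanks σ = (rankPerm x, rankPerm y)}
  have hC : #(compatibles (Fin.append x y)) = #(compatibles x ×ˢ compatibles y) * K := by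
    simpa using card_filter_halfRanks_mem (x := x) (y := y) univ
  have hK : (K : ℝ) ≠ 0 := by
    have := (compatibles_nonempty (Fin.append x y)).card_pos
    rw [hC] at this
    exact_mod_cast (Nat.pos_of_mul_pos_left this).ne'
  have hterm : ∀ p : Perm (Fin m) × Perm (Fin n), extPred {p.1} x * extPred {p.2} y =
      if p ∈ compatibles x ×ˢ compatibles y then
        ((#(compatibles x ×ˢ compatibles y) : ℕ) : ℝ)⁻¹ else 0 := by
    intro p
    rw [extPred_singleton, extPred_singleton, card_product, Nat.cast_mul, mul_inv]
    split_ifs <;> simp_all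
  rw [extPred_eq_card_div, hC, sum_congr rfl fun p _ => hterm p, sum_ite_mem, sum_const]
  simp only [mem_filter, mem_univ, true_and]
  rw [card_filter_halfRanks_mem, nsmul_eq_mul, Nat.cast_mul, Nat.cast_mul,
    mul_div_mul_right _ _ hK, div_eq_mul_inv]

end Fibers

lemma soPred_eq_filter_halfRanks (t : ℕ) :
    soPred t = ({σ | halfRanks σ ∈ (univ : Finset (Perm (Fin t))).diag} : Finset _) := by
  ext σ
  simp only [soPred, mem_filter, mem_univ, true_and, mem_diag, halfRanks]
  rw [rankPerm_eq_rankPerm_iff (σ.injective.comp (Fin.castAdd_injective t t))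
    (σ.injective.comp (Fin.natAdd_injective t t))]
  rfl

lemma extPred_soPred_append {t : ℕ} (x y : Fin t → ℤ) :
    extPred (soPred t) (Fin.append x y) = ∑ σ, extPred {σ} x * extPred {σ} y := by
  rw [soPred_eq_filter_halfRanks, extPred_filter_halfRanks_mem, diag, sum_map]
  rfl

section FinsumProd

variable {α β R : Type*}

lemma finite_support_mul_prod [MulZeroClass R] {f : α → R} {g : β → R}
    (hf : f.support.Finite) (hg : g.support.Finite) :
    (fun p : α × β => f p.1 * g p.2).support.Finite :=
  (hf.prod hg).subset fun _ hp => ⟨left_ne_zero_of_mul hp, right_ne_zero_of_mul hp⟩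

lemma finsum_mul_finsum [NonUnitalNonAssocSemiring R] [NoZeroDivisors R]
    {f : α → R} {g : β → R} (hf : f.support.Finite) (hg : g.support.Finite) :
    ∑ᶠ p : α × β, f p.1 * g p.2 = (∑ᶠ a, f a) * ∑ᶠ b, g b := by
  rw [finsum_curry _ (finite_support_mul_prod hf hg), finsum_mul]
  exact finsum_congr fun a => by rw [mul_finsum]

end FinsumProd

theorem decoupled_same_order_general (t : ℕ)
    (DX DY : (Fin t → ℤ) → ℝ)
    (hXfin : (Function.support DX).Finite) (hYfin : (Function.support DY).Finite)
    (hXord : ∀ σ : Equiv.Perm (Fin t),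
      (∑ᶠ x, DX x * extPred {σ} x) = 1 / (t.factorial : ℝ))
    (hYord : ∀ σ : Equiv.Perm (Fin t),
      (∑ᶠ y, DY y * extPred {σ} y) = 1 / (t.factorial : ℝ)) :
    (∑ᶠ p : (Fin t → ℤ) × (Fin t → ℤ),
        (DX p.1 * DY p.2) * extPred (soPred t) (Fin.append p.1 p.2))
      = 1 / (t.factorial : ℝ) := by
  have hfin : ∀ (D : (Fin t → ℤ) → ℝ) (σ : Perm (Fin t)), D.support.Finite →
      (fun x => D x * extPred {σ} x).support.Finite := fun D σ hD =>
    hD.subset (support_mul_subset_left _ _)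
  calc (∑ᶠ p : (Fin t → ℤ) × (Fin t → ℤ),
        (DX p.1 * DY p.2) * extPred (soPred t) (Fin.append p.1 p.2))
      = ∑ᶠ p : (Fin t → ℤ) × (Fin t → ℤ), ∑ σ,
          (DX p.1 * extPred {σ} p.1) * (DY p.2 * extPred {σ} p.2) := by
        refine finsum_congr fun p => ?_
        rw [extPred_soPred_append, mul_sum]
        exact sum_congr rfl fun σ _ => by ring
    _ = ∑ σ : Perm (Fin t), (1 / (t.factorial : ℝ)) * (1 / (t.factorial : ℝ)) := by
        rw [finsum_sum_comm]
        · refine sum_congr rfl fun σ _ => ?_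
          rw [finsum_mul_finsum (hfin DX σ hXfin) (hfin DY σ hYfin), hXord, hYord]
        · exact fun σ _ => finite_support_mul_prod (hfin DX σ hXfin) (hfin DY σ hYfin)
    _ = 1 / (t.factorial : ℝ) := by
        rw [sum_const, card_univ, Fintype.card_perm, Fintype.card_fin, nsmul_eq_mul]
        field_simp

/-- decoupled Same-Order value.
If `X` and `Y` are independent finitely supported `ℤ^t`-valued random vectors, each of whose
relative orders is uniform (`E[1_σ] = 1/t!` for every `σ ∈ S_t`), then
`E[SO_{2t}(X, Y)] = 1/t!`. -/
theorem decoupled_same_order (t : ℕ) (ht : 1 ≤ t)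
    (DX DY : (Fin t → ℤ) → ℝ)
    (hXnn : ∀ x, 0 ≤ DX x) (hYnn : ∀ y, 0 ≤ DY y)
    (hXfin : (Function.support DX).Finite) (hYfin : (Function.support DY).Finite)
    (hXsum : ∑ᶠ x, DX x = 1) (hYsum : ∑ᶠ y, DY y = 1)
    (hXord : ∀ σ : Equiv.Perm (Fin t),
      (∑ᶠ x, DX x * extPred {σ} x) = 1 / (t.factorial : ℝ))
    (hYord : ∀ σ : Equiv.Perm (Fin t),
      (∑ᶠ y, DY y * extPred {σ} y) = 1 / (t.factorial : ℝ)) :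
    (∑ᶠ p : (Fin t → ℤ) × (Fin t → ℤ),
        (DX p.1 * DY p.2) * extPred (soPred t) (Fin.append p.1 p.2))
      = 1 / (t.factorial : ℝ) :=
  decoupled_same_order_general t DX DY hXfin hYfin hXord hYord

end OCSPPaper
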